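/- arXiv:2106.15913 — 3 statements merged into one kernel-verified Lean document; each statement's English description precedes it below -/
import Mathlib

section
/- (Area Lemma, odd case.) Let φ : ℝ → ℝ be monotone non-decreasing and odd with φ(0) = 0 and |φ(σ)| ≤ γ|σ| for all σ ∈ ℝ, for some γ > 0. Let x : ℝ → ℝ be measurable and square-integrable over ℝ. Then for every τ ∈ ℝ, |∫_{−∞}^{∞} x(t − τ) φ(x(t)) dt| ≤ ∫_{−∞}^{∞} x(t) φ(x(t)) dt. -/
/-!
With `Φ a = ∫₀ᵃ φ`, monotonicity of `φ` gives Young's inequality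
`a φ(b) ≤ Φ(a) + (b φ(b) - Φ(b))`. Take `a = ± x(t - τ)`, `b = x(t)` and integrate: `Φ` is even
because `φ` is odd, and `∫ Φ(x(t - τ)) dt = ∫ Φ(x(t)) dt` by translation invariance, so the
`Φ` terms cancel and `± ∫ x(t - τ) φ(x(t)) dt ≤ ∫ x(t) φ(x(t)) dt`. The linear bound on `φ` makes
everything integrable, since then `0 ≤ Φ(x) ≤ x φ(x) ≤ γ x²`.
-/

open MeasureTheory intervalIntegral

lemma monotone_of_sub_mul_sub_nonneg {φ : ℝ → ℝ} (h : ∀ x y : ℝ, (φ x - φ y) * (x - y) ≥ 0) :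
    Monotone φ := by
  intro a b hab
  rcases hab.eq_or_lt with rfl | hlt
  · exact le_rfl
  · nlinarith [h a b]

lemma MeasureTheory.MemLp.comp_of_abs_le {α : Type*} [MeasurableSpace α] {μ : Measure α}
    {p : ENNReal} {φ : ℝ → ℝ} {γ : ℝ} {x : α → ℝ} (hx : MemLp x p μ) (hφ : Measurable φ)
    (hbound : ∀ σ, |φ σ| ≤ γ * |σ|) : MemLp (fun t => φ (x t)) p μ :=
  hx.of_le_mul (hφ.comp_aemeasurable hx.aestronglyMeasurable.aemeasurable).aestronglyMeasurable
    (ae_of_all _ fun t => hbound (x t))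

namespace AreaLemma

noncomputable def primitive (φ : ℝ → ℝ) (a : ℝ) : ℝ := ∫ s in (0 : ℝ)..a, φ s

variable {φ : ℝ → ℝ}

lemma sub_primitive (hφ : Monotone φ) (a b : ℝ) :
    primitive φ a - primitive φ b = ∫ s in b..a, φ s :=
  integral_interval_sub_left (hφ.intervalIntegrable (μ := volume))
    hφ.intervalIntegrable

lemma sub_mul_le_integral (hφ : Monotone φ) (a b : ℝ) :
    (a - b) * φ b ≤ ∫ s in b..a, φ s := by
  rcases le_total b a with hba | hab
  · simpa using integral_mono_on hba intervalIntegrable_const (hφ.intervalIntegrable (μ := volume))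
      fun s hs => hφ hs.1
  · have := integral_mono_on hab (hφ.intervalIntegrable (μ := volume)) intervalIntegrable_const
      fun s hs => hφ hs.2
    rw [integral_symm]
    simp only [intervalIntegral.integral_const, smul_eq_mul] at this
    linarith

-- Fenchel–Young: `b * φ b - primitive φ b` is the convex conjugate of `primitive φ` at `φ b`.
lemma mul_le_primitive_add (hφ : Monotone φ) (a b : ℝ) :
    a * φ b ≤ primitive φ a + (b * φ b - primitive φ b) := by
  have := sub_mul_le_integral hφ a b
  rw [← sub_primitive hφ] at this
  linarith

lemma continuous_primitive (hφ : Monotone φ) : Continuous (primitive φ) :=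
  intervalIntegral.continuous_primitive (fun _ _ => hφ.intervalIntegrable) 0

lemma primitive_neg (hodd : ∀ x, φ (-x) = -φ x) (a : ℝ) : primitive φ (-a) = primitive φ a := by
  have h := integral_comp_neg (a := 0) (b := a) φ
  simp only [hodd, intervalIntegral.integral_neg, neg_zero] at h
  rw [primitive, primitive, integral_symm, ← h, neg_neg]

@[simp] lemma primitive_zero : primitive φ 0 = 0 := integral_same

lemma primitive_nonneg (hφ : Monotone φ) (hφ0 : φ 0 = 0) (a : ℝ) : 0 ≤ primitive φ a := by
  simpa [hφ0] using mul_le_primitive_add hφ a 0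

lemma primitive_le_mul (hφ : Monotone φ) (a : ℝ) : primitive φ a ≤ a * φ a := by
  simpa using mul_le_primitive_add hφ 0 a

section Integral

variable {α : Type*} [MeasurableSpace α] {μ : Measure α}

lemma integrable_primitive_comp (hφ : Monotone φ) (hφ0 : φ 0 = 0) {x : α → ℝ}
    (hx : AEStronglyMeasurable x μ) (hxx : Integrable (fun t => x t * φ (x t)) μ) :
    Integrable (fun t => primitive φ (x t)) μ :=
  hxx.mono' ((continuous_primitive hφ).comp_aestronglyMeasurable hx) <| ae_of_all _ fun t => by
    rw [Real.norm_eq_abs, abs_of_nonneg (primitive_nonneg hφ hφ0 _)]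
    exact primitive_le_mul hφ _

lemma integral_mul_le_of_integral_primitive_eq (hφ : Monotone φ) {x y : α → ℝ}
    (hyx : Integrable (fun t => y t * φ (x t)) μ) (hxx : Integrable (fun t => x t * φ (x t)) μ)
    (hΦy : Integrable (fun t => primitive φ (y t)) μ)
    (hΦx : Integrable (fun t => primitive φ (x t)) μ)
    (heq : ∫ t, primitive φ (y t) ∂μ = ∫ t, primitive φ (x t) ∂μ) :
    ∫ t, y t * φ (x t) ∂μ ≤ ∫ t, x t * φ (x t) ∂μ := by
  have hdefect : Integrable (fun t => x t * φ (x t) - primitive φ (x t)) μ := hxx.sub hΦx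
  calc ∫ t, y t * φ (x t) ∂μ
      ≤ ∫ t, primitive φ (y t) + (x t * φ (x t) - primitive φ (x t)) ∂μ :=
        integral_mono hyx (hΦy.add hdefect) fun t => mul_le_primitive_add hφ _ _
    _ = ∫ t, x t * φ (x t) ∂μ := by
        rw [integral_add hΦy hdefect, integral_sub hxx hΦx, heq]
        ring

end Integral

end AreaLemma

open AreaLemma

theorem area_lemma_odd_general (φ : ℝ → ℝ)
    (hmono : ∀ x y : ℝ, (φ x - φ y) * (x - y) ≥ 0)
    (hodd : ∀ x : ℝ, φ (-x) = -φ x)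
    (hzero : φ 0 = 0)
    (γ : ℝ)
    (hbound : ∀ σ : ℝ, |φ σ| ≤ γ * |σ|)
    (x : ℝ → ℝ)
    (hx : MemLp x 2 (volume : Measure ℝ)) :
    ∀ τ : ℝ, |∫ t : ℝ, x (t - τ) * φ (x t)| ≤ ∫ t : ℝ, x t * φ (x t) := by
  intro τ
  have hφ := monotone_of_sub_mul_sub_nonneg hmono
  have hφx : MemLp (fun t => φ (x t)) 2 volume := hx.comp_of_abs_le hφ.measurable hbound
  have hxτ : MemLp (fun t => x (t - τ)) 2 volume :=
    hx.comp_measurePreserving (measurePreserving_sub_right volume τ)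
  have hxx : Integrable (fun t => x t * φ (x t)) volume := hx.integrable_mul hφx
  have hΦx := integrable_primitive_comp hφ hzero hx.aestronglyMeasurable hxx
  have hΦxτ := hΦx.comp_sub_right τ
  have hshift := integral_sub_right_eq_self (μ := volume) (fun t => primitive φ (x t)) τ
  have upper := integral_mul_le_of_integral_primitive_eq hφ (hxτ.integrable_mul hφx) hxx
    hΦxτ hΦx hshift
  have lower := integral_mul_le_of_integral_primitive_eq hφ (y := fun t => -x (t - τ))
    (hxτ.neg.integrable_mul hφx) hxx (by simpa only [primitive_neg hodd] using hΦxτ) hΦx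
    (by simpa only [primitive_neg hodd] using hshift)
  simp only [neg_mul, MeasureTheory.integral_neg] at lower
  exact abs_le.mpr ⟨by linarith, upper⟩

theorem area_lemma_odd (φ : ℝ → ℝ)
    (hmono : ∀ x y : ℝ, (φ x - φ y) * (x - y) ≥ 0)
    (hodd : ∀ x : ℝ, φ (-x) = -φ x)
    (hzero : φ 0 = 0)
    (γ : ℝ) (hγ : γ > 0)
    (hbound : ∀ σ : ℝ, |φ σ| ≤ γ * |σ|)
    (x : ℝ → ℝ) (hx_meas : Measurable x)
    (hx : MemLp x 2 (volume : Measure ℝ)) :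
    ∀ τ : ℝ, |∫ t : ℝ, x (t - τ) * φ (x t)| ≤ ∫ t : ℝ, x t * φ (x t) :=
  area_lemma_odd_general φ hmono hodd hzero γ hbound x hx
end

section
/- (Zames–Falb time-domain IQC for monotone nonlinearities.) Let φ : ℝ → ℝ be monotone non-decreasing with φ(0) = 0 and |φ(σ)| ≤ γ|σ| for all σ ∈ ℝ, for some γ > 0. Let x : ℝ → ℝ be measurable and square-integrable over ℝ, and let h : ℝ → ℝ be integrable with h(t) ≥ 0 for all t and ∫_{−∞}^{∞} |h(τ)| dτ ≤ 1. Then ∫_{−∞}^{∞} (x(t) − (h ⋆ x)(t)) φ(x(t)) dt ≥ 0, where (h ⋆ x)(t) = ∫_{−∞}^{∞} h(τ) x(t − τ) dτ denotes convolution. -/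
/-!
Let `Φ u = ∫₀ᵘ φ`. Since `φ` is monotone, `Φ` is convex with subgradient `φ a` at `a`:
`b φ(a) ≤ Φ b - Φ a + a φ(a)`. With `a = x t`, `b = x (t - τ)`, integration in `t` makes the
`Φ`-terms cancel by translation invariance, so `∫ x(t - τ) φ(x t) dt ≤ ∫ x φ(x)` for every `τ`.
Averaging against `h ≥ 0` (Fubini) gives `∫ (h ⋆ x) φ(x) ≤ (∫ h) ∫ x φ(x) ≤ ∫ x φ(x)`, the last
step because `∫ x φ(x) ≥ 0` and `∫ h ≤ 1`.
-/

open MeasureTheory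

theorem Monotone.sub_mul_le_intervalIntegral {φ : ℝ → ℝ} (hφ : Monotone φ) (a b : ℝ) :
    (b - a) * φ a ≤ ∫ s in a..b, φ s := by
  rcases le_total a b with hab | hba
  · calc (b - a) * φ a = ∫ _ in a..b, φ a := by simp
      _ ≤ ∫ s in a..b, φ s :=
        intervalIntegral.integral_mono_on hab intervalIntegrable_const hφ.intervalIntegrable
          fun s hs => hφ hs.1
  · have : ∫ s in b..a, φ s ≤ (a - b) * φ a := calc
      ∫ s in b..a, φ s ≤ ∫ _ in b..a, φ a :=
        intervalIntegral.integral_mono_on hba hφ.intervalIntegrable intervalIntegrable_const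
          fun s hs => hφ hs.2
      _ = (a - b) * φ a := by simp
    rw [intervalIntegral.integral_symm]
    linarith

theorem abs_intervalIntegral_le_of_abs_le_mul_abs {φ : ℝ → ℝ} {γ : ℝ} (hγ : 0 ≤ γ)
    (hbound : ∀ σ, |φ σ| ≤ γ * |σ|) (u : ℝ) : |∫ s in (0 : ℝ)..u, φ s| ≤ γ * u ^ 2 := by
  have hle : ∀ s ∈ Set.uIoc 0 u, ‖φ s‖ ≤ γ * |u| := fun s hs => by
    have hsu : |s| ≤ |u| := by
      rcases Set.mem_uIoc.1 hs with ⟨h0s, hsu⟩ | ⟨hus, hs0⟩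
      · exact abs_le_abs hsu (by linarith)
      · exact abs_le_abs_of_nonpos hs0 hus.le
    calc ‖φ s‖ ≤ γ * |s| := hbound s
      _ ≤ γ * |u| := by gcongr
  simpa [mul_assoc, ← sq] using intervalIntegral.norm_integral_le_of_norm_le_const hle

theorem MeasureTheory.MemLp.comp_of_abs_le_mul_abs {α : Type*} [MeasurableSpace α]
    {μ : Measure α} {p : ENNReal} {φ : ℝ → ℝ} (hφ : Measurable φ) {γ : ℝ}
    (hbound : ∀ σ, |φ σ| ≤ γ * |σ|) {x : α → ℝ} (hx : MemLp x p μ) :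
    MemLp (fun t => φ (x t)) p μ :=
  hx.of_le_mul (hφ.comp_aemeasurable hx.aemeasurable).aestronglyMeasurable
    (ae_of_all _ fun t => hbound (x t))

theorem integral_comp_mul_le_integral_mul {α : Type*} [MeasurableSpace α] {μ : Measure α}
    {φ : ℝ → ℝ} (hφ : Monotone φ) {γ : ℝ} (hγ : 0 ≤ γ) (hbound : ∀ σ, |φ σ| ≤ γ * |σ|)
    {x : α → ℝ} (hx : MemLp x 2 μ) {T : α → α} (hT : MeasurePreserving T μ μ) :
    ∫ t, x (T t) * φ (x t) ∂μ ≤ ∫ t, x t * φ (x t) ∂μ := by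
  set Φ : ℝ → ℝ := fun u => ∫ s in (0 : ℝ)..u, φ s
  have hΦ_subgradient : ∀ a b, b * φ a ≤ Φ b - Φ a + a * φ a := fun a b => by
    have := hφ.sub_mul_le_intervalIntegral a b
    rw [← intervalIntegral.integral_interval_sub_left (a := 0) hφ.intervalIntegrable
      hφ.intervalIntegrable] at this
    simp only [Φ]
    linarith
  have hΦ_cont : Continuous Φ :=
    intervalIntegral.continuous_primitive (fun _ _ => hφ.intervalIntegrable) 0
  have hΦx : Integrable (fun t => Φ (x t)) μ :=
    (hx.integrable_sq.const_mul γ).mono' (hΦ_cont.comp_aestronglyMeasurable hx.1)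
      (ae_of_all _ fun t => abs_intervalIntegral_le_of_abs_le_mul_abs hγ hbound (x t))
  have hΦxT : Integrable (fun t => Φ (x (T t))) μ := hT.integrable_comp_of_integrable hΦx
  have hΦxT_eq : ∫ t, Φ (x (T t)) ∂μ = ∫ t, Φ (x t) ∂μ := by
    have := integral_map hT.measurable.aemeasurable (hT.map_eq.symm ▸ hΦx.1)
    rwa [hT.map_eq, eq_comm] at this
  have hφx := hx.comp_of_abs_le_mul_abs hφ.measurable hbound
  have hxφx : Integrable (fun t => x t * φ (x t)) μ := hx.integrable_mul hφx
  calc ∫ t, x (T t) * φ (x t) ∂μ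
      ≤ ∫ t, Φ (x (T t)) - Φ (x t) + x t * φ (x t) ∂μ :=
        integral_mono ((hx.comp_measurePreserving hT).integrable_mul hφx)
          ((hΦxT.sub hΦx).add hxφx) fun t => hΦ_subgradient (x t) (x (T t))
    _ = ∫ t, x t * φ (x t) ∂μ := by
        rw [integral_add (f := fun t => Φ (x (T t)) - Φ (x t)) (hΦxT.sub hΦx) hxφx,
          integral_sub hΦxT hΦx, hΦxT_eq, sub_self, zero_add]

section Convolution

variable {G : Type*} [MeasurableSpace G] [AddGroup G] [MeasurableAdd₂ G] [MeasurableNeg G]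
  {μ : Measure G} [SFinite μ] [μ.IsAddRightInvariant] {x g h : G → ℝ}

theorem integrable_mul_comp_sub_mul (hx : MemLp x 2 μ) (hg : MemLp g 2 μ) (hh : Integrable h μ) :
    Integrable (fun p : G × G => h p.2 * x (p.1 - p.2) * g p.1) (μ.prod μ) := by
  have hdom : Integrable (fun p : G × G => |h p.2| * x (p.1 - p.2) ^ 2 + g p.1 ^ 2 * |h p.2|)
      (μ.prod μ) := by
    refine Integrable.add ?_ (hg.integrable_sq.mul_prod hh.abs)
    simpa using hh.abs.convolution_integrand (ContinuousLinearMap.mul ℝ ℝ) hx.integrable_sq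
  have hmeas : AEStronglyMeasurable (fun p : G × G => h p.2 * x (p.1 - p.2) * g p.1) (μ.prod μ) :=
    (hh.1.comp_snd.mul
      (hx.1.comp_quasiMeasurePreserving (quasiMeasurePreserving_sub_of_right_invariant μ μ))).mul
      hg.1.comp_fst
  refine hdom.mono' hmeas (ae_of_all _ fun p => ?_)
  rw [Real.norm_eq_abs, abs_mul, abs_mul]
  nlinarith [abs_nonneg (h p.2), sq_abs (x (p.1 - p.2)), sq_abs (g p.1),
    mul_nonneg (abs_nonneg (h p.2)) (sq_nonneg (|x (p.1 - p.2)| - |g p.1|))]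

theorem integrable_convolution_mul (hx : MemLp x 2 μ) (hg : MemLp g 2 μ) (hh : Integrable h μ) :
    Integrable (fun t => (∫ τ, h τ * x (t - τ) ∂μ) * g t) μ := by
  simpa only [integral_mul_const] using (integrable_mul_comp_sub_mul hx hg hh).integral_prod_left

theorem integral_convolution_mul_le (hx : MemLp x 2 μ) (hg : MemLp g 2 μ) (hh : Integrable h μ)
    (hh_nonneg : ∀ τ, 0 ≤ h τ) {c : ℝ} (hc : ∀ τ, ∫ t, x (t - τ) * g t ∂μ ≤ c) :
    ∫ t, (∫ τ, h τ * x (t - τ) ∂μ) * g t ∂μ ≤ (∫ τ, h τ ∂μ) * c := by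
  have hF := integrable_mul_comp_sub_mul hx hg hh
  calc ∫ t, (∫ τ, h τ * x (t - τ) ∂μ) * g t ∂μ
      = ∫ t, ∫ τ, h τ * x (t - τ) * g t ∂μ ∂μ := by simp only [integral_mul_const]
    _ = ∫ τ, ∫ t, h τ * x (t - τ) * g t ∂μ ∂μ := integral_integral_swap hF
    _ ≤ ∫ τ, h τ * c ∂μ := integral_mono hF.integral_prod_right (hh.mul_const c) fun τ => by
        simp only [mul_assoc, integral_const_mul]
        exact mul_le_mul_of_nonneg_left (hc τ) (hh_nonneg τ)
    _ = (∫ τ, h τ ∂μ) * c := integral_mul_const c h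

end Convolution

theorem zames_falb_iqc_monotone_general (φ : ℝ → ℝ)
    (hmono : ∀ x y : ℝ, (φ x - φ y) * (x - y) ≥ 0)
    (hzero : φ 0 = 0)
    (γ : ℝ) (hγ : γ > 0)
    (hbound : ∀ σ : ℝ, |φ σ| ≤ γ * |σ|)
    (x : ℝ → ℝ)
    (hx : MemLp x 2 (volume : Measure ℝ))
    (h : ℝ → ℝ) (hh_int : Integrable h (volume : Measure ℝ))
    (hh_pos : ∀ t : ℝ, h t ≥ 0)
    (hh_norm : (∫ τ : ℝ, |h τ|) ≤ 1) :
    (∫ t : ℝ, (x t - ∫ τ : ℝ, h τ * x (t - τ)) * φ (x t)) ≥ 0 := by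
  have hφ : Monotone φ := fun a b hab => by
    rcases hab.eq_or_lt with rfl | hlt
    · rfl
    · exact sub_nonneg.1 (nonneg_of_mul_nonneg_left (hmono b a) (sub_pos.2 hlt))
  have hφx : MemLp (fun t => φ (x t)) 2 volume := hx.comp_of_abs_le_mul_abs hφ.measurable hbound
  have hxφx_nonneg : 0 ≤ ∫ t, x t * φ (x t) := integral_nonneg fun t => by
    simpa [hzero, mul_comm] using hmono (x t) 0
  have hh_le_one : ∫ τ, h τ ≤ 1 := by simpa only [abs_of_nonneg (hh_pos _)] using hh_norm
  have hconv : ∫ t, (∫ τ, h τ * x (t - τ)) * φ (x t) ≤ (∫ τ, h τ) * ∫ t, x t * φ (x t) :=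
    integral_convolution_mul_le hx hφx hh_int hh_pos fun τ =>
      integral_comp_mul_le_integral_mul hφ hγ.le hbound hx (measurePreserving_sub_right volume τ)
  simp only [sub_mul]
  rw [integral_sub (f := fun t => x t * φ (x t)) (hx.integrable_mul hφx)
    (integrable_convolution_mul hx hφx hh_int)]
  nlinarith [mul_le_mul_of_nonneg_right hh_le_one hxφx_nonneg]

theorem zames_falb_iqc_monotone (φ : ℝ → ℝ)
    (hmono : ∀ x y : ℝ, (φ x - φ y) * (x - y) ≥ 0)
    (hzero : φ 0 = 0)
    (γ : ℝ) (hγ : γ > 0)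
    (hbound : ∀ σ : ℝ, |φ σ| ≤ γ * |σ|)
    (x : ℝ → ℝ) (hx_meas : Measurable x)
    (hx : MemLp x 2 (volume : Measure ℝ))
    (h : ℝ → ℝ) (hh_int : Integrable h (volume : Measure ℝ))
    (hh_pos : ∀ t : ℝ, h t ≥ 0)
    (hh_norm : (∫ τ : ℝ, |h τ|) ≤ 1) :
    (∫ t : ℝ, (x t - ∫ τ : ℝ, h τ * x (t - τ)) * φ (x t)) ≥ 0 :=
  zames_falb_iqc_monotone_general φ hmono hzero γ hγ hbound x hx h hh_int hh_pos hh_norm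
end

section
/- (Zames–Falb time-domain IQC for odd slope-restricted nonlinearities.) Let α > 0 and let φ : ℝ → ℝ be odd with φ(0) = 0, satisfying the slope restriction 0 ≤ (φ(x) − φ(y))/(x − y) ≤ α for all x ≠ y. Let v : ℝ → ℝ be measurable and square-integrable over ℝ, and let h : ℝ → ℝ be integrable (not necessarily nonnegative) with ∫ |h| ≤ 1. Define u(t) = v(t) − φ(v(t))/α. Then ∫_{−∞}^{∞} (u(t) − (h ⋆ u)(t)) φ(v(t)) dt ≥ 0, where (h ⋆ u)(t) = ∫_{−∞}^{∞} h(τ) u(t − τ) dτ denotes convolution. -/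
/-!
With `ψ x = x - φ x / α` and the potential `F x = ∫₀ˣ φ - φ x ^ 2 / (2 α)`, monotonicity and the
slope bound `α` give `φ x * (ψ y - ψ x) ≤ F y - F x`: `F` is convex along `ψ` with subgradient `φ`.
Since `φ` is odd, `F` is even, and applying the inequality at `y` and `-y` yields
`|φ x * ψ y| ≤ F y + (φ x * ψ x - F x)`. Take `x = v t`, `y = v (t - τ)`, weight by `|h τ|` and
integrate over `(t, τ)`: by translation invariance the `F` terms cancel, leaving
`∫ (h ⋆ u) φ(v) ≤ ‖h‖₁ ∫ u φ(v) ≤ ∫ u φ(v)`.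
-/

open MeasureTheory

section SlopeRestricted

variable {φ : ℝ → ℝ} {α : ℝ}

lemma monotone_of_mul_sub_nonneg (h : ∀ x y, 0 ≤ (φ x - φ y) * (x - y)) : Monotone φ := by
  intro x y hxy
  rcases hxy.eq_or_lt with rfl | hlt
  · exact le_rfl
  · nlinarith [h x y]

lemma lipschitzWith_of_mul_sub_le (hmono : Monotone φ)
    (h : ∀ x y, (φ x - φ y) * (x - y) ≤ α * (x - y) ^ 2) :
    LipschitzWith α.toNNReal φ := by
  refine LipschitzWith.of_dist_le_mul fun x y => ?_
  wlog hyx : y ≤ x generalizing x y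
  · rw [dist_comm, dist_comm x]
    exact this y x (le_of_not_ge hyx)
  rw [Real.dist_eq, Real.dist_eq, abs_of_nonneg (sub_nonneg.2 (hmono hyx)),
    abs_of_nonneg (sub_nonneg.2 hyx)]
  rcases hyx.eq_or_lt with rfl | hlt
  · simp
  · nlinarith [h x y, Real.le_coe_toNNReal α]

end SlopeRestricted

section Potential

variable {φ : ℝ → ℝ} {α : ℝ}

lemma sq_div_le_integral_sub_of_le (hα : 0 < α) (hmono : Monotone φ)
    (hlip : LipschitzWith α.toNNReal φ) {x y : ℝ} (hxy : x ≤ y) :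
    (φ y - φ x) ^ 2 / (2 * α) ≤ ∫ s in x..y, (φ s - φ x) := by
  have hφ : Continuous φ := hlip.continuous
  have hgap : ∀ s ≤ y, φ y - φ s ≤ α * (y - s) := fun s hs => by
    have := hlip.dist_le_mul y s
    rwa [Real.coe_toNNReal α hα.le, Real.dist_eq, Real.dist_eq, abs_of_nonneg (sub_nonneg.2 hs),
      abs_of_nonneg (sub_nonneg.2 (hmono hs))] at this
  set d := φ y - φ x
  set c := y - d / α
  have hd : 0 ≤ d := sub_nonneg.2 (hmono hxy)
  have hxc : x ≤ c := by
    have : d / α ≤ y - x := (div_le_iff₀ hα).2 (by linarith [hgap x hxy])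
    linarith
  have hcy : c ≤ y := sub_le_self _ (div_nonneg hd hα.le)
  have hint : ∀ a b, IntervalIntegrable (fun s => φ s - φ x) volume a b :=
    fun a b => (hφ.sub continuous_const).intervalIntegrable a b
  -- Split at `c = y - d / α`, where the lower bounds `φ s ≥ φ x` (monotonicity) and
  -- `φ s ≥ φ y - α (y - s)` (Lipschitz) cross.
  have hleft : 0 ≤ ∫ s in x..c, (φ s - φ x) :=
    intervalIntegral.integral_nonneg hxc fun s hs => sub_nonneg.2 (hmono hs.1)
  have hright : ∫ s in c..y, (d - α * (y - s)) ≤ ∫ s in c..y, (φ s - φ x) :=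
    intervalIntegral.integral_mono_on hcy (by apply Continuous.intervalIntegrable; fun_prop)
      (hint c y) fun s hs => by linarith [hgap s hs.2]
  have hramp : ∫ s in c..y, (d - α * (y - s)) = d ^ 2 / (2 * α) := by
    rw [intervalIntegral.integral_comp_sub_left (fun r => d - α * r), sub_self,
      show y - c = d / α by ring, intervalIntegral.integral_sub intervalIntegrable_const
      ((continuous_const_mul α).intervalIntegrable _ _), intervalIntegral.integral_const,
      intervalIntegral.integral_const_mul, integral_id, smul_eq_mul]
    field_simp
    ring
  rw [← intervalIntegral.integral_add_adjacent_intervals (hint x c) (hint c y)]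
  linarith

lemma sq_div_le_integral_sub (hα : 0 < α) (hmono : Monotone φ)
    (hlip : LipschitzWith α.toNNReal φ) (x y : ℝ) :
    (φ y - φ x) ^ 2 / (2 * α) ≤ ∫ s in x..y, (φ s - φ x) := by
  rcases le_total x y with hxy | hyx
  · exact sq_div_le_integral_sub_of_le hα hmono hlip hxy
  have hmono' : Monotone fun s => -φ (-s) := fun a b hab => neg_le_neg (hmono (neg_le_neg hab))
  have hlip' : LipschitzWith α.toNNReal fun s => -φ (-s) :=
    LipschitzWith.of_dist_le_mul fun a b => by
      simpa only [dist_neg_neg] using hlip.dist_le_mul (-a) (-b)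
  have := sq_div_le_integral_sub_of_le hα hmono' hlip' (neg_le_neg hyx)
  simp only [neg_neg] at this
  rw [intervalIntegral.integral_comp_neg (fun s => -φ s - -φ x), neg_neg, neg_neg,
    intervalIntegral.integral_symm, ← intervalIntegral.integral_neg] at this
  convert this using 1
  · ring
  · congr 1; ext s; ring

noncomputable def slopePotential (α : ℝ) (φ : ℝ → ℝ) (x : ℝ) : ℝ :=
  (∫ s in (0 : ℝ)..x, φ s) - φ x ^ 2 / (2 * α)

lemma mul_sub_le_slopePotential_sub (hα : 0 < α) (hmono : Monotone φ)
    (hlip : LipschitzWith α.toNNReal φ) (x y : ℝ) :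
    φ x * ((y - φ y / α) - (x - φ x / α)) ≤ slopePotential α φ y - slopePotential α φ x := by
  have hint : ∀ a b, IntervalIntegrable φ volume a b := hlip.continuous.intervalIntegrable
  have hsub : ∫ s in x..y, (φ s - φ x) = (∫ s in x..y, φ s) - (y - x) * φ x := by
    rw [intervalIntegral.integral_sub (hint x y) intervalIntegrable_const,
      intervalIntegral.integral_const, smul_eq_mul]
  have hdiff : slopePotential α φ y - slopePotential α φ x
      = (∫ s in x..y, φ s) - (φ y ^ 2 - φ x ^ 2) / (2 * α) := by
    rw [slopePotential, slopePotential, ← intervalIntegral.integral_interval_sub_left (hint 0 y)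
      (hint 0 x)]
    ring
  have hbound := sq_div_le_integral_sub hα hmono hlip x y
  rw [hsub] at hbound
  have hα' : α ≠ 0 := hα.ne'
  have hexpand : φ x * ((y - φ y / α) - (x - φ x / α))
      = (y - x) * φ x + (φ y - φ x) ^ 2 / (2 * α) - (φ y ^ 2 - φ x ^ 2) / (2 * α) := by
    field_simp
    ring
  rw [hdiff, hexpand]
  linarith

variable (α) in
lemma slopePotential_zero (h0 : φ 0 = 0) : slopePotential α φ 0 = 0 := by
  simp [slopePotential, h0]

lemma slopePotential_neg (hodd : Function.Odd φ) (x : ℝ) :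
    slopePotential α φ (-x) = slopePotential α φ x := by
  have h := intervalIntegral.integral_comp_neg (a := 0) (b := x) φ
  simp only [hodd _, intervalIntegral.integral_neg, neg_zero] at h
  rw [slopePotential, slopePotential, hodd x, neg_sq, intervalIntegral.integral_symm, ← h, neg_neg]

lemma slopePotential_nonneg (hα : 0 < α) (hmono : Monotone φ)
    (hlip : LipschitzWith α.toNNReal φ) (h0 : φ 0 = 0) (x : ℝ) : 0 ≤ slopePotential α φ x := by
  simpa [h0, slopePotential_zero α h0] using mul_sub_le_slopePotential_sub hα hmono hlip 0 x

lemma slopePotential_le_mul (hα : 0 < α) (hmono : Monotone φ)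
    (hlip : LipschitzWith α.toNNReal φ) (h0 : φ 0 = 0) (x : ℝ) :
    slopePotential α φ x ≤ φ x * (x - φ x / α) := by
  have := mul_sub_le_slopePotential_sub hα hmono hlip x 0
  rw [h0, slopePotential_zero α h0] at this
  linear_combination this

lemma abs_mul_le_slopePotential (hα : 0 < α) (hmono : Monotone φ)
    (hlip : LipschitzWith α.toNNReal φ) (hodd : Function.Odd φ) (x y : ℝ) :
    |φ x * (y - φ y / α)|
      ≤ slopePotential α φ y + (φ x * (x - φ x / α) - slopePotential α φ x) := by
  have hy := mul_sub_le_slopePotential_sub hα hmono hlip x y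
  have hny := mul_sub_le_slopePotential_sub hα hmono hlip x (-y)
  rw [slopePotential_neg hodd, hodd y] at hny
  rw [abs_le]
  exact ⟨by linear_combination hny, by linear_combination hy⟩

lemma continuous_slopePotential (hφ : Continuous φ) : Continuous (slopePotential α φ) :=
  (intervalIntegral.continuous_primitive hφ.intervalIntegrable 0).sub
    ((hφ.pow 2).div_const _)

end Potential

section Convolution

variable {h u w G : ℝ → ℝ}

lemma integrable_abs_mul_comp_sub_add (hh : Integrable h) (hG : Integrable G) {P : ℝ → ℝ}
    (hP : Integrable P) :
    Integrable (fun p : ℝ × ℝ => |h p.2| * (G (p.1 - p.2) + P p.1)) (volume.prod volume) := by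
  simp only [mul_add]
  refine Integrable.add ?_ ?_
  · simpa using hh.abs.convolution_integrand (ContinuousLinearMap.mul ℝ ℝ) hG
  · simpa only [mul_comm] using hP.mul_prod hh.abs

lemma integral_integral_abs_mul_comp_sub_add (hG : Integrable G) {P : ℝ → ℝ}
    (hP : Integrable P) :
    ∫ τ, ∫ t, |h τ| * (G (t - τ) + P t) = (∫ τ, |h τ|) * ∫ t, (G t + P t) := by
  simp only [integral_const_mul, integral_add (hG.comp_sub_right _) hP, integral_sub_right_eq_self,
    ← integral_add hG hP, integral_mul_const]

lemma integral_convolution_mul_le_s16 (hh : Integrable h) (hu : AEStronglyMeasurable u)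
    (hw : AEStronglyMeasurable w) (hG : Integrable G) (huw : Integrable fun t => u t * w t)
    (hbound : ∀ s t, |u s * w t| ≤ G s + (u t * w t - G t)) :
    Integrable (fun t => (∫ τ, h τ * u (t - τ)) * w t) ∧
      ∫ t, (∫ τ, h τ * u (t - τ)) * w t ≤ (∫ τ, |h τ|) * ∫ t, u t * w t := by
  set K : ℝ × ℝ → ℝ := fun p => h p.2 * (u (p.1 - p.2) * w p.1)
  have hP : Integrable fun t => u t * w t - G t := huw.sub hG
  have hB := integrable_abs_mul_comp_sub_add hh hG hP
  have hKB : ∀ p : ℝ × ℝ, ‖K p‖ ≤ |h p.2| * (G (p.1 - p.2) + (u p.1 * w p.1 - G p.1)) :=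
    fun p => by
      rw [Real.norm_eq_abs, abs_mul]
      exact mul_le_mul_of_nonneg_left (hbound _ _) (abs_nonneg _)
  have hK : Integrable K (volume.prod volume) := by
    refine hB.mono' ?_ (ae_of_all _ hKB)
    exact hh.aestronglyMeasurable.comp_snd.mul ((hu.comp_quasiMeasurePreserving
      (quasiMeasurePreserving_sub_of_right_invariant volume volume)).mul hw.comp_fst)
  have hconv : (fun t => (∫ τ, h τ * u (t - τ)) * w t) = fun t => ∫ τ, K (t, τ) := by
    ext t
    rw [← integral_mul_const]
    simp only [K, mul_assoc]
  rw [hconv]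
  refine ⟨hK.integral_prod_left, ?_⟩
  calc ∫ t, ∫ τ, K (t, τ) = ∫ p, K p ∂(volume.prod volume) := (integral_prod K hK).symm
    _ ≤ ∫ p : ℝ × ℝ, |h p.2| * (G (p.1 - p.2) + (u p.1 * w p.1 - G p.1)) ∂(volume.prod volume) :=
      integral_mono hK hB fun p => (le_abs_self _).trans (hKB p)
    _ = (∫ τ, |h τ|) * ∫ t, u t * w t := by
      rw [integral_prod_symm _ hB, integral_integral_abs_mul_comp_sub_add hG hP]
      simp

end Convolution

theorem zames_falb_iqc_odd_slope_restricted_general (α : ℝ) (hα : α > 0) (φ : ℝ → ℝ)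
    (hodd : ∀ x : ℝ, φ (-x) = -φ x)
    (hslope : ∀ x y : ℝ,
      0 ≤ (φ x - φ y) * (x - y) ∧ (φ x - φ y) * (x - y) ≤ α * (x - y) ^ 2)
    (v : ℝ → ℝ)
    (hv : MemLp v 2 (volume : Measure ℝ))
    (h : ℝ → ℝ) (hh_int : Integrable h (volume : Measure ℝ))
    (hh_norm : (∫ τ : ℝ, |h τ|) ≤ 1)
    (u : ℝ → ℝ) (hu : ∀ t : ℝ, u t = v t - φ (v t) / α) :
    (∫ t : ℝ, (u t - ∫ τ : ℝ, h τ * u (t - τ)) * φ (v t)) ≥ 0 := by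
  have hmono := monotone_of_mul_sub_nonneg fun x y => (hslope x y).1
  have hlip := lipschitzWith_of_mul_sub_le hmono fun x y => (hslope x y).2
  have h0 : φ 0 = 0 := Function.Odd.map_zero hodd
  have hw : MemLp (fun t => φ (v t)) 2 := hlip.comp_memLp h0 hv
  have hu2 : MemLp u 2 := by
    rw [funext hu]
    simp only [div_eq_inv_mul]
    exact hv.sub (hw.const_mul α⁻¹)
  have huw : Integrable fun t => u t * φ (v t) := hu2.integrable_mul hw
  set G := fun t => slopePotential α φ (v t)
  have hG_le : ∀ t, G t ≤ u t * φ (v t) := fun t => by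
    rw [hu, mul_comm]; exact slopePotential_le_mul hα hmono hlip h0 (v t)
  have hG : Integrable G := by
    refine huw.mono' ((continuous_slopePotential hlip.continuous).comp_aestronglyMeasurable hv.1)
      (ae_of_all _ fun t => ?_)
    rw [Real.norm_eq_abs, abs_of_nonneg (slopePotential_nonneg hα hmono hlip h0 (v t))]
    exact hG_le t
  obtain ⟨hconv, hle⟩ := integral_convolution_mul_le_s16 hh_int hu2.1 hw.1 hG huw fun s t => by
    simpa only [hu, mul_comm] using abs_mul_le_slopePotential hα hmono hlip hodd (v t) (v s)
  have hq : 0 ≤ ∫ t, u t * φ (v t) :=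
    integral_nonneg fun t => (slopePotential_nonneg hα hmono hlip h0 (v t)).trans (hG_le t)
  simp only [sub_mul]
  rw [integral_sub huw hconv]
  linarith [mul_le_of_le_one_left hq hh_norm]

theorem zames_falb_iqc_odd_slope_restricted (α : ℝ) (hα : α > 0) (φ : ℝ → ℝ)
    (hodd : ∀ x : ℝ, φ (-x) = -φ x)
    (hzero : φ 0 = 0)
    (hslope : ∀ x y : ℝ,
      0 ≤ (φ x - φ y) * (x - y) ∧ (φ x - φ y) * (x - y) ≤ α * (x - y) ^ 2)
    (v : ℝ → ℝ) (hv_meas : Measurable v)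
    (hv : MemLp v 2 (volume : Measure ℝ))
    (h : ℝ → ℝ) (hh_int : Integrable h (volume : Measure ℝ))
    (hh_norm : (∫ τ : ℝ, |h τ|) ≤ 1)
    (u : ℝ → ℝ) (hu : ∀ t : ℝ, u t = v t - φ (v t) / α) :
    (∫ t : ℝ, (u t - ∫ τ : ℝ, h τ * u (t - τ)) * φ (v t)) ≥ 0 :=
  zames_falb_iqc_odd_slope_restricted_general α hα φ hodd hslope v hv h hh_int hh_norm u hu
end
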